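/- The optimal dynamic value is subadditive in the universe of products: for all U_1, U_2 ⊆ {1,…,n}, OPT^DP(U_1 ∪ U_2) ≤ OPT^DP(U_1) + OPT^DP(U_2). -/

import Mathlib

open Finset

/-- MNL choice probability of product `i` when assortment `S` is offered. -/
noncomputable def phi {n : ℕ} (v : Fin n → ℝ) (S : Finset (Fin n)) (i : Fin n) : ℝ :=
  v i / (1 + ∑ j ∈ S, v j)

/-- MNL no-purchase probability when assortment `S` is offered. -/
noncomputable def phi0 {n : ℕ} (v : Fin n → ℝ) (S : Finset (Fin n)) : ℝ :=
  1 / (1 + ∑ j ∈ S, v j)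

/-- The dynamic-programming value functions `M_t(ℓ)` of the adaptive maximum load
problem over the universe `U`: `M_0(ℓ) = max_i ℓ_i` and
`M_t(ℓ) = max_{S ⊆ U} (φ_0(S)·M_{t-1}(ℓ) + ∑_{i∈S} φ_i(S)·M_{t-1}(ℓ + e_i))`. -/
noncomputable def dpVal {n : ℕ} (v : Fin n → ℝ) (U : Finset (Fin n)) :
    ℕ → (Fin n → ℕ) → ℝ
  | 0, ℓ => ((Finset.univ.sup ℓ : ℕ) : ℝ)
  | t + 1, ℓ =>
      U.powerset.sup' ⟨∅, Finset.empty_mem_powerset U⟩ fun S =>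
        phi0 v S * dpVal v U t ℓ +
          ∑ i ∈ S, phi v S i * dpVal v U t (Function.update ℓ i (ℓ i + 1))

/-- `OPT^DP(U) = M_T(0)`: the optimal expected maximum load achievable by an adaptive
policy offering assortments from the universe `U` to `T` sequentially arriving customers
making independent MNL choices. -/
noncomputable def dpOpt {n : ℕ} (v : Fin n → ℝ) (U : Finset (Fin n)) (T : ℕ) : ℝ :=
  dpVal v U T fun _ => 0

/-!
Induction on the horizon, for arbitrary load vectors: `M_t^{U₁ ∪ U₂}(ℓ₁ + ℓ₂) ≤ M_t^{U₁}(ℓ₁) +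
M_t^{U₂}(ℓ₂)`. An assortment `S ⊆ U₁ ∪ U₂` is split into `S₁ = S ∩ U₁` and `S₂ = S \ U₁`, offered
in the two subproblems, a sale of `i ∈ S₁` (resp. `S₂`) being charged to the first (resp. second)
load vector. Writing the value of an offer as `a + ∑ φ_i(S) (f_i - a)`, the increments `f_i - a`
are nonnegative because `M_t` is monotone in the loads, and shrinking `S` to `S₁` or `S₂` only
raises the MNL purchase probabilities `φ_i`.
-/

noncomputable def offerValue {n : ℕ} (v : Fin n → ℝ) (S : Finset (Fin n)) (a : ℝ)
    (f : Fin n → ℝ) : ℝ :=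
  phi0 v S * a + ∑ i ∈ S, phi v S i * f i

section MNL

variable {n : ℕ} {v : Fin n → ℝ}

lemma one_add_sum_pos (hv : ∀ i, 0 ≤ v i) (S : Finset (Fin n)) : 0 < 1 + ∑ j ∈ S, v j :=
  add_pos_of_pos_of_nonneg one_pos (sum_nonneg fun i _ => hv i)

lemma phi0_nonneg (hv : ∀ i, 0 ≤ v i) (S : Finset (Fin n)) : 0 ≤ phi0 v S :=
  div_nonneg zero_le_one (one_add_sum_pos hv S).le

lemma phi_nonneg (hv : ∀ i, 0 ≤ v i) (S : Finset (Fin n)) (i : Fin n) : 0 ≤ phi v S i :=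
  div_nonneg (hv i) (one_add_sum_pos hv S).le

lemma phi0_add_sum_phi (hv : ∀ i, 0 ≤ v i) (S : Finset (Fin n)) :
    phi0 v S + ∑ i ∈ S, phi v S i = 1 := by
  have := (one_add_sum_pos hv S).ne'
  simp only [phi, phi0, ← sum_div]
  field_simp

lemma phi_anti (hv : ∀ i, 0 ≤ v i) {S T : Finset (Fin n)} (h : S ⊆ T) (i : Fin n) :
    phi v T i ≤ phi v S i :=
  div_le_div_of_nonneg_left (hv i) (one_add_sum_pos hv S)
    (add_le_add_right (sum_le_sum_of_subset_of_nonneg h fun j _ _ => hv j) 1)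

lemma offerValue_eq_add_sum_sub (hv : ∀ i, 0 ≤ v i) (S : Finset (Fin n)) (a : ℝ)
    (f : Fin n → ℝ) : offerValue v S a f = a + ∑ i ∈ S, phi v S i * (f i - a) := by
  simp only [offerValue, mul_sub, sum_sub_distrib, ← sum_mul]
  linear_combination a * phi0_add_sum_phi hv S

lemma offerValue_mono (hv : ∀ i, 0 ≤ v i) {S : Finset (Fin n)} {a a' : ℝ} {f f' : Fin n → ℝ}
    (ha : a ≤ a') (hf : ∀ i ∈ S, f i ≤ f' i) : offerValue v S a f ≤ offerValue v S a' f' :=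
  add_le_add (mul_le_mul_of_nonneg_left ha (phi0_nonneg hv S))
    (sum_le_sum fun i hi => mul_le_mul_of_nonneg_left (hf i hi) (phi_nonneg hv S i))

lemma offerValue_union_le (hv : ∀ i, 0 ≤ v i) {S₁ S₂ : Finset (Fin n)} (hS : Disjoint S₁ S₂)
    {a b c : ℝ} {f g h : Fin n → ℝ} (hf : ∀ i ∈ S₁, a ≤ f i) (hg : ∀ i ∈ S₂, b ≤ g i)
    (hc : c ≤ a + b) (hh₁ : ∀ i ∈ S₁, h i ≤ f i + b) (hh₂ : ∀ i ∈ S₂, h i ≤ a + g i) :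
    offerValue v (S₁ ∪ S₂) c h ≤ offerValue v S₁ a f + offerValue v S₂ b g := by
  have shrink : ∀ {S : Finset (Fin n)} {d e : ℝ} (i : Fin n), S ⊆ S₁ ∪ S₂ → d ≤ e → 0 ≤ e →
      phi v (S₁ ∪ S₂) i * d ≤ phi v S i * e := fun i hsub hde he =>
    (mul_le_mul_of_nonneg_left hde (phi_nonneg hv _ i)).trans
      (mul_le_mul_of_nonneg_right (phi_anti hv hsub i) he)
  calc offerValue v (S₁ ∪ S₂) c h
      ≤ offerValue v (S₁ ∪ S₂) (a + b) h := offerValue_mono hv hc fun _ _ => le_rfl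
    _ = a + b + (∑ i ∈ S₁, phi v (S₁ ∪ S₂) i * (h i - (a + b)) +
          ∑ i ∈ S₂, phi v (S₁ ∪ S₂) i * (h i - (a + b))) := by
      rw [offerValue_eq_add_sum_sub hv, sum_union hS]
    _ ≤ a + b + (∑ i ∈ S₁, phi v S₁ i * (f i - a) + ∑ i ∈ S₂, phi v S₂ i * (g i - b)) := by
      refine add_le_add_right
        (add_le_add (sum_le_sum fun i hi => ?_) (sum_le_sum fun i hi => ?_)) _
      · exact shrink i subset_union_left (by linarith [hh₁ i hi]) (sub_nonneg.2 (hf i hi))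
      · exact shrink i subset_union_right (by linarith [hh₂ i hi]) (sub_nonneg.2 (hg i hi))
    _ = offerValue v S₁ a f + offerValue v S₂ b g := by
      rw [offerValue_eq_add_sum_sub hv, offerValue_eq_add_sum_sub hv]
      ring

end MNL

lemma update_add_one_eq_add_single {n : ℕ} (ℓ : Fin n → ℕ) (i : Fin n) :
    Function.update ℓ i (ℓ i + 1) = ℓ + Pi.single i 1 := by
  funext j
  rcases eq_or_ne j i with rfl | hj <;> simp [*]

lemma univ_sup_add_le {n : ℕ} (ℓ₁ ℓ₂ : Fin n → ℕ) :
    univ.sup (ℓ₁ + ℓ₂) ≤ univ.sup ℓ₁ + univ.sup ℓ₂ :=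
  Finset.sup_le fun _ hi => add_le_add (le_sup hi) (le_sup hi)

section DP

variable {n : ℕ} {v : Fin n → ℝ} {U : Finset (Fin n)} {t : ℕ}

lemma dpVal_succ_le {ℓ : Fin n → ℕ} {c : ℝ}
    (h : ∀ S ⊆ U, offerValue v S (dpVal v U t ℓ) (fun i => dpVal v U t (ℓ + Pi.single i 1)) ≤ c) :
    dpVal v U (t + 1) ℓ ≤ c := by
  refine sup'_le _ _ fun S hS => ?_
  simpa only [offerValue, update_add_one_eq_add_single] using h S (mem_powerset.1 hS)

lemma le_dpVal_succ {S : Finset (Fin n)} (hS : S ⊆ U) (ℓ : Fin n → ℕ) :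
    offerValue v S (dpVal v U t ℓ) (fun i => dpVal v U t (ℓ + Pi.single i 1)) ≤
      dpVal v U (t + 1) ℓ := by
  rw [dpVal]
  simpa only [offerValue, update_add_one_eq_add_single] using
    le_sup' (fun S => offerValue v S (dpVal v U t ℓ)
      (fun i => dpVal v U t (Function.update ℓ i (ℓ i + 1)))) (mem_powerset.2 hS)

lemma dpVal_mono (hv : ∀ i, 0 ≤ v i) (U : Finset (Fin n)) (t : ℕ) : Monotone (dpVal v U t) := by
  induction t with
  | zero => exact fun ℓ ℓ' h => Nat.cast_le.2 (sup_mono_fun fun i _ => h i)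
  | succ t ih =>
    refine fun ℓ ℓ' h => dpVal_succ_le fun S hS => (le_dpVal_succ hS ℓ').trans' ?_
    exact offerValue_mono hv (ih h) fun _ _ => ih (add_le_add_left h _)

lemma dpVal_le_dpVal_add_single (hv : ∀ i, 0 ≤ v i) (ℓ : Fin n → ℕ) (i : Fin n) :
    dpVal v U t ℓ ≤ dpVal v U t (ℓ + Pi.single i 1) :=
  dpVal_mono hv U t (le_add_of_nonneg_right zero_le)

lemma dpVal_union_add_le (hv : ∀ i, 0 ≤ v i) (U₁ U₂ : Finset (Fin n)) (t : ℕ)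
    (ℓ₁ ℓ₂ : Fin n → ℕ) :
    dpVal v (U₁ ∪ U₂) t (ℓ₁ + ℓ₂) ≤ dpVal v U₁ t ℓ₁ + dpVal v U₂ t ℓ₂ := by
  induction t generalizing ℓ₁ ℓ₂ with
  | zero => simp only [dpVal]; exact_mod_cast univ_sup_add_le ℓ₁ ℓ₂
  | succ t ih =>
    refine dpVal_succ_le fun S hS => ?_
    rw [← sdiff_union_inter S U₁, union_comm]
    refine (offerValue_union_le hv (disjoint_sdiff_inter S U₁).symm ?_ ?_ (ih ℓ₁ ℓ₂) ?_ ?_).trans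
      (add_le_add (le_dpVal_succ inter_subset_right ℓ₁) (le_dpVal_succ (sdiff_le_iff.2 hS) ℓ₂))
    · exact fun i _ => dpVal_le_dpVal_add_single hv ℓ₁ i
    · exact fun i _ => dpVal_le_dpVal_add_single hv ℓ₂ i
    · intro i _
      rw [add_right_comm]
      exact ih _ _
    · intro i _
      rw [add_assoc]
      exact ih _ _

end DP

/-- The optimal dynamic value is subadditive in the universe of products. -/
theorem dpOpt_subadditive
    (n T : ℕ) (v : Fin n → ℝ) (hv : ∀ i, 0 < v i) (U₁ U₂ : Finset (Fin n)) :
    dpOpt v (U₁ ∪ U₂) T ≤ dpOpt v U₁ T + dpOpt v U₂ T := by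
  have h := dpVal_union_add_le (fun i => (hv i).le) U₁ U₂ T 0 0
  rw [add_zero] at h
  exact h
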